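/- If f : F_5^2 → ℝ_{≥0} is fishy and P ∈ F_5^2 satisfies f(P) > 0 and f(2P) > 0, then f(-2P) + f(-P) + f(P) + f(2P) ≤ 8; moreover, equality holds only if f(-2P) = f(-P) = f(P) = f(2P) = 2. -/
import Mathlib


/-- A function `f : F_5^2 → ℝ≥0` is fishy. -/
def Fishy (f : ZMod 5 × ZMod 5 → ℝ) : Prop :=
  (∀ P, 0 ≤ f P) ∧
  (28 ≤ ∑ P : ZMod 5 × ZMod 5, f P) ∧ (∀ P, f P ≤ 5) ∧
  (∀ X : Finset (ZMod 5 × ZMod 5), ∀ k : ℤ, Odd k → ∑ P ∈ X, f P ≠ (k : ℝ) / 2) ∧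
  (∀ P Q : ZMod 5 × ZMod 5, ∀ ε : ℤ, ε = 1 ∨ ε = -1 →
    0 < f P → 0 < f Q → 0 < f (P + ε • Q) →
    f P + f Q + (⌈f (P + ε • Q)⌉ : ℝ) ≤ 6)

lemma fishy_h50 : (5 : ZMod 5 × ZMod 5) = 0 := by decide

lemma fishy_k1 (P : ZMod 5 × ZMod 5) : P + (1:ℤ) • (2 • P) = -(2 • P) := by
  simp only [one_smul, nsmul_eq_mul, Nat.cast_ofNat]
  linear_combination P * fishy_h50

lemma fishy_k2 (P : ZMod 5 × ZMod 5) : P + (-1:ℤ) • (2 • P) = -P := by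
  simp only [neg_smul, one_smul, nsmul_eq_mul, Nat.cast_ofNat]
  ring

lemma fishy_k3 (P : ZMod 5 × ZMod 5) : -P + (1:ℤ) • (-(2 • P)) = 2 • P := by
  simp only [one_smul, nsmul_eq_mul, Nat.cast_ofNat]
  linear_combination -P * fishy_h50

lemma fishy_k4 (P : ZMod 5 × ZMod 5) : -P + (-1:ℤ) • (-(2 • P)) = P := by
  simp only [neg_smul, one_smul, nsmul_eq_mul, Nat.cast_ofNat]
  ring

lemma fishy_k5 (P : ZMod 5 × ZMod 5) : 2 • P + (-1:ℤ) • P = P := by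
  simp only [neg_smul, one_smul, nsmul_eq_mul, Nat.cast_ofNat]
  ring

theorem stmt_9 (f : ZMod 5 × ZMod 5 → ℝ) (hf : Fishy f) (P : ZMod 5 × ZMod 5)
    (h1 : 0 < f P) (h2 : 0 < f (2 • P)) :
    f (-(2 • P)) + f (-P) + f P + f (2 • P) ≤ 8 ∧
      (f (-(2 • P)) + f (-P) + f P + f (2 • P) = 8 →
        f (-(2 • P)) = 2 ∧ f (-P) = 2 ∧ f P = 2 ∧ f (2 • P) = 2) := by
  obtain ⟨hpos, -, -, -, hF3⟩ := hf
  have hc1 : (f P : ℝ) ≤ (⌈f P⌉ : ℝ) := Int.le_ceil _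
  have hc2 : (f (2 • P) : ℝ) ≤ (⌈f (2 • P)⌉ : ℝ) := Int.le_ceil _
  have hc3 : (f (-P) : ℝ) ≤ (⌈f (-P)⌉ : ℝ) := Int.le_ceil _
  have hc4 : (f (-(2 • P)) : ℝ) ≤ (⌈f (-(2 • P))⌉ : ℝ) := Int.le_ceil _
  rcases (hpos (-(2 • P))).lt_or_eq with ha | ha
  · rcases (hpos (-P)).lt_or_eq with hb | hb
    · -- all four positive
      have e1 := hF3 P (2 • P) 1 (Or.inl rfl) h1 h2
      rw [fishy_k1 P] at e1
      have e1 := e1 ha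
      have e2 := hF3 P (2 • P) (-1) (Or.inr rfl) h1 h2
      rw [fishy_k2 P] at e2
      have e2 := e2 hb
      have e3 := hF3 (-P) (-(2 • P)) 1 (Or.inl rfl) hb ha
      rw [fishy_k3 P] at e3
      have e3 := e3 h2
      have e4 := hF3 (-P) (-(2 • P)) (-1) (Or.inr rfl) hb ha
      rw [fishy_k4 P] at e4
      have e4 := e4 h1
      constructor
      · linarith
      · intro h8
        refine ⟨?_, ?_, ?_, ?_⟩ <;> linarith
    · -- f(-P) = 0, f(-2P) > 0
      have e1 := hF3 P (2 • P) 1 (Or.inl rfl) h1 h2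
      rw [fishy_k1 P] at e1
      have e1 := e1 ha
      constructor
      · linarith
      · intro h8; exfalso; linarith
  · rcases (hpos (-P)).lt_or_eq with hb | hb
    · -- f(-2P) = 0, f(-P) > 0
      have e2 := hF3 P (2 • P) (-1) (Or.inr rfl) h1 h2
      rw [fishy_k2 P] at e2
      have e2 := e2 hb
      constructor
      · linarith
      · intro h8; exfalso; linarith
    · -- f(-2P) = 0, f(-P) = 0
      have e5 := hF3 (2 • P) P (-1) (Or.inr rfl) h2 h1
      rw [fishy_k5 P] at e5
      have e5 := e5 h1
      have hceil : (1 : ℝ) ≤ (⌈f P⌉ : ℝ) := by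
        have : (0 : ℤ) < ⌈f P⌉ := Int.ceil_pos.mpr h1
        exact_mod_cast this
      constructor
      · linarith
      · intro h8; exfalso; linarith
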